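/- (Deterministic corollary for μ(A).) Let G = (ZMod 2)^n with n ≥ 1 and let A ⊆ G. Suppose that for every nonempty S ⊆ {1,…,n} the Fourier coefficient of the indicator of A satisfies |1̂_A(S)| ≤ (4/|G|)·√(ln(|G|)·|A|). Then for all subsets B, C ⊆ G with |B| = |C| = |A|, μ(A,B,C) ≤ |A|³/|G| + 4·|A|^{3/2}·√(ln |G|). -/

import Mathlib

open Finset

/-- The character `χ_S` of `(ZMod 2)^n` associated to `S ⊆ {1,…,n}`. -/
noncomputable def chi (n : ℕ) (S : Finset (Fin n)) (x : Fin n → ZMod 2) : ℝ :=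
  (-1 : ℝ) ^ (∑ i ∈ S, (x i).val)

/-- The Fourier coefficient `f̂(S) = (1/|G|) Σ_x f(x) χ_S(x)`. -/
noncomputable def fhat (n : ℕ) (f : (Fin n → ZMod 2) → ℝ) (S : Finset (Fin n)) : ℝ :=
  (∑ x : Fin n → ZMod 2, f x * chi n S x) / (2 ^ n : ℝ)

/-- The indicator function of a subset. -/
def ind {n : ℕ} (A : Finset (Fin n → ZMod 2)) : (Fin n → ZMod 2) → ℝ :=
  fun x => if x ∈ A then 1 else 0

/-- `μ(A,B,C) = |{(a,b,c) ∈ A × B × C : a = b + c}|`. -/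
def mu {n : ℕ} (A B C : Finset (Fin n → ZMod 2)) : ℕ :=
  ((A ×ˢ B ×ˢ C).filter (fun p => p.1 = p.2.1 + p.2.2)).card

/-- The convolution `(f*g)(x) = Σ_y f(y) g(x+y)`. -/
noncomputable def conv (n : ℕ) (f g : (Fin n → ZMod 2) → ℝ) : (Fin n → ZMod 2) → ℝ :=
  fun x => ∑ y : Fin n → ZMod 2, f y * g (x + y)

/-!
Since `χ_S(x + y) = χ_S(x) χ_S(y)`, the Fourier transform turns the convolution `1_B ∗ 1_C` into
`|G| 1̂_B 1̂_C`, so Plancherel gives `μ(A,B,C) = Σ_x 1_A(x) (1_B ∗ 1_C)(x) = |G|² Σ_S 1̂_A 1̂_B 1̂_C(S)`.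
The term `S = ∅` is `|A| |B| |C| / |G|`. Every other term is at most the assumed bound on `|1̂_A(S)|`
times `|1̂_B(S)| |1̂_C(S)|`, and by Cauchy–Schwarz and Parseval
`Σ_S |1̂_B(S)| |1̂_C(S)| ≤ √(|B| |C|) / |G|`.
-/

section

variable {n : ℕ}

lemma neg_one_pow_val_add {R : Type*} [Ring R] (u v : ZMod 2) :
    (-1 : R) ^ (u + v).val = (-1 : R) ^ u.val * (-1 : R) ^ v.val := by
  have h : (u + v).val % 2 = (u.val + v.val) % 2 := by revert u v; decide
  rw [neg_one_pow_eq_pow_mod_two, h, ← neg_one_pow_eq_pow_mod_two, pow_add]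

lemma chi_eq_prod (S : Finset (Fin n)) (x : Fin n → ZMod 2) :
    chi n S x = ∏ i ∈ S, (-1 : ℝ) ^ (x i).val := by
  rw [chi, prod_pow_eq_pow_sum]

lemma chi_add (S : Finset (Fin n)) (x y : Fin n → ZMod 2) :
    chi n S (x + y) = chi n S x * chi n S y := by
  simp only [chi_eq_prod, ← prod_mul_distrib, Pi.add_apply]
  exact prod_congr rfl fun i _ => neg_one_pow_val_add _ _

@[simp]
lemma chi_empty (x : Fin n → ZMod 2) : chi n ∅ x = 1 := by
  simp [chi]

/-- Orthogonality: `Σ_S χ_S(x) = ∏_i (1 + (-1)^{x_i})`, which vanishes unless `x = 0`. -/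
lemma sum_chi (x : Fin n → ZMod 2) :
    ∑ S : Finset (Fin n), chi n S x = if x = 0 then (2 : ℝ) ^ n else 0 := by
  have hprod : ∑ S : Finset (Fin n), chi n S x = ∏ i : Fin n, ((-1 : ℝ) ^ (x i).val + 1) := by
    rw [prod_add, ← powerset_univ]
    exact sum_congr rfl fun S _ => by simp [chi_eq_prod]
  rw [hprod]
  split_ifs with hx
  · subst hx
    norm_num
  · obtain ⟨i, hi⟩ : ∃ i, x i ≠ 0 := by
      by_contra! h
      exact hx (funext h)
    have hxi : x i = 1 := by revert hi; generalize x i = u; revert u; decide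
    exact prod_eq_zero (mem_univ i) (by simp [hxi, ZMod.val_one])

lemma sum_chi_mul_chi (x y : Fin n → ZMod 2) :
    ∑ S : Finset (Fin n), chi n S x * chi n S y = if x = y then (2 : ℝ) ^ n else 0 := by
  simp only [← chi_add, sum_chi, ← ZModModule.sub_eq_add, sub_eq_zero]

@[simp]
lemma fhat_empty (f : (Fin n → ZMod 2) → ℝ) :
    fhat n f ∅ = (∑ x, f x) / (2 : ℝ) ^ n := by
  simp [fhat]

lemma sum_fhat_mul_fhat (f g : (Fin n → ZMod 2) → ℝ) :
    ∑ S : Finset (Fin n), fhat n f S * fhat n g S = (∑ x, f x * g x) / (2 : ℝ) ^ n := by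
  have hexpand : ∀ S, fhat n f S * fhat n g S
      = (∑ x, ∑ y, f x * g y * (chi n S x * chi n S y)) / ((2 : ℝ) ^ n) ^ 2 := by
    intro S
    rw [fhat, fhat, div_mul_div_comm, sum_mul_sum, ← sq]
    congr 1
    exact sum_congr rfl fun x _ => sum_congr rfl fun y _ => by ring
  simp_rw [hexpand, ← sum_div]
  rw [sum_comm]
  simp_rw [sum_comm (γ := Finset (Fin n)), ← mul_sum, sum_chi_mul_chi, mul_ite, mul_zero,
    sum_ite_eq, mem_univ, if_true, ← sum_mul]
  field_simp

lemma fhat_conv (f g : (Fin n → ZMod 2) → ℝ) (S : Finset (Fin n)) :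
    fhat n (conv n f g) S = 2 ^ n * fhat n f S * fhat n g S := by
  have hshift : ∀ y, ∑ x, g (x + y) * chi n S x = chi n S y * ∑ x, g x * chi n S x := by
    intro y
    rw [← Equiv.sum_comp (Equiv.addRight y), mul_sum]
    refine sum_congr rfl fun x _ => ?_
    simp only [Equiv.coe_addRight, add_assoc, ZModModule.add_self, add_zero, chi_add]
    ring
  have hsum : ∑ x, conv n f g x * chi n S x = ∑ y, f y * ∑ x, g (x + y) * chi n S x := by
    simp only [conv, sum_mul, mul_sum]
    rw [sum_comm]
    exact sum_congr rfl fun y _ => sum_congr rfl fun x _ => by ring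
  simp only [fhat, hsum, hshift, ← mul_assoc, ← sum_mul]
  field_simp

lemma sq_mul_sum_fhat_mul_fhat_mul_fhat (f g h : (Fin n → ZMod 2) → ℝ) :
    ((2 : ℝ) ^ n) ^ 2 * ∑ S : Finset (Fin n), fhat n f S * fhat n g S * fhat n h S
      = ∑ x, f x * conv n g h x := by
  have hconv : ∀ S, fhat n f S * fhat n g S * fhat n h S
      = fhat n f S * fhat n (conv n g h) S / 2 ^ n := by
    intro S
    rw [fhat_conv]
    field_simp
  simp_rw [hconv, ← sum_div, sum_fhat_mul_fhat]
  field_simp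

lemma sum_ind (A : Finset (Fin n → ZMod 2)) : ∑ x, ind A x = #A := by
  simp [ind, sum_ite_mem]

lemma sum_ind_mul (A : Finset (Fin n → ZMod 2)) (f : (Fin n → ZMod 2) → ℝ) :
    ∑ x, ind A x * f x = ∑ x ∈ A, f x := by
  simp [ind, sum_ite_mem]

lemma sum_fhat_ind_sq (A : Finset (Fin n → ZMod 2)) :
    ∑ S : Finset (Fin n), fhat n (ind A) S ^ 2 = #A / (2 : ℝ) ^ n := by
  simp_rw [sq, sum_fhat_mul_fhat, sum_ind_mul]
  simp [ind]

lemma mu_eq_sum_ind_mul_conv (A B C : Finset (Fin n → ZMod 2)) :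
    (mu A B C : ℝ) = ∑ x, ind A x * conv n (ind B) (ind C) x := by
  have hsolve : ∀ a b c : Fin n → ZMod 2, a = b + c ↔ a + b = c := fun a b c => by
    rw [← sub_eq_iff_eq_add', ZModModule.sub_eq_add]
  simp only [conv, sum_ind_mul]
  rw [mu, card_filter, Nat.cast_sum, sum_product]
  refine sum_congr rfl fun a _ => ?_
  rw [sum_product]
  refine sum_congr rfl fun b _ => ?_
  simp [hsolve, ind]

lemma sum_abs_fhat_ind_mul_abs_fhat_ind_le (B C : Finset (Fin n → ZMod 2)) :
    ∑ S : Finset (Fin n), |fhat n (ind B) S| * |fhat n (ind C) S| ≤ √(#B * #C) / 2 ^ n := by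
  calc ∑ S : Finset (Fin n), |fhat n (ind B) S| * |fhat n (ind C) S|
      ≤ √(∑ S : Finset (Fin n), |fhat n (ind B) S| ^ 2) *
          √(∑ S : Finset (Fin n), |fhat n (ind C) S| ^ 2) :=
        Real.sum_mul_le_sqrt_mul_sqrt _ _ _
    _ = √(#B * #C) / 2 ^ n := by
        simp only [sq_abs, sum_fhat_ind_sq]
        rw [← Real.sqrt_mul (by positivity), div_mul_div_comm, ← sq, Real.sqrt_div',
          Real.sqrt_sq (by positivity)]
        positivity

lemma mu_le_of_abs_fhat_ind_le {M : ℝ} (hM : 0 ≤ M) (A B C : Finset (Fin n → ZMod 2))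
    (hA : ∀ S : Finset (Fin n), S ≠ ∅ → |fhat n (ind A) S| ≤ M) :
    (mu A B C : ℝ) ≤ #A * #B * #C / 2 ^ n + 2 ^ n * M * √(#B * #C) := by
  set F : Finset (Fin n) → ℝ := fun S => fhat n (ind A) S * fhat n (ind B) S * fhat n (ind C) S
  have hzero : ((2 : ℝ) ^ n) ^ 2 * F ∅ = #A * #B * #C / 2 ^ n := by
    simp only [F, fhat_empty, sum_ind]
    field_simp
  have hnonzero : ∑ S ∈ univ.erase ∅, F S ≤ M * (√(#B * #C) / 2 ^ n) := calc
    ∑ S ∈ univ.erase ∅, F S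
        ≤ ∑ S ∈ univ.erase ∅, M * (|fhat n (ind B) S| * |fhat n (ind C) S|) := by
          refine sum_le_sum fun S hS => (le_abs_self (F S)).trans ?_
          simp only [F, abs_mul, mul_assoc]
          exact mul_le_mul_of_nonneg_right (hA S (ne_of_mem_erase hS)) (by positivity)
      _ ≤ ∑ S, M * (|fhat n (ind B) S| * |fhat n (ind C) S|) :=
          sum_le_sum_of_subset_of_nonneg (erase_subset _ _) fun _ _ _ => by positivity
      _ ≤ M * (√(#B * #C) / 2 ^ n) := by
          rw [← mul_sum]
          exact mul_le_mul_of_nonneg_left (sum_abs_fhat_ind_mul_abs_fhat_ind_le B C) hM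
  calc (mu A B C : ℝ) = ((2 : ℝ) ^ n) ^ 2 * ∑ S, F S := by
        rw [mu_eq_sum_ind_mul_conv, sq_mul_sum_fhat_mul_fhat_mul_fhat]
    _ = ((2 : ℝ) ^ n) ^ 2 * F ∅ + ((2 : ℝ) ^ n) ^ 2 * ∑ S ∈ univ.erase ∅, F S := by
        rw [← add_sum_erase _ _ (mem_univ _), mul_add]
    _ ≤ #A * #B * #C / 2 ^ n + ((2 : ℝ) ^ n) ^ 2 * (M * (√(#B * #C) / 2 ^ n)) := by
        rw [hzero]
        gcongr
    _ = #A * #B * #C / 2 ^ n + 2 ^ n * M * √(#B * #C) := by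
        field_simp

end

theorem stmt3_general (n : ℕ) (A : Finset (Fin n → ZMod 2))
    (hA : ∀ S : Finset (Fin n), S ≠ ∅ →
      |fhat n (ind A) S| ≤ (4 / (2 ^ n : ℝ)) * Real.sqrt (Real.log (2 ^ n) * A.card)) :
    ∀ B C : Finset (Fin n → ZMod 2), B.card = A.card → C.card = A.card →
      (mu A B C : ℝ) ≤ (A.card : ℝ) ^ 3 / (2 ^ n : ℝ) +
        4 * (A.card : ℝ) ^ ((3 : ℝ) / 2) * Real.sqrt (Real.log (2 ^ n)) := by
  intro B C hB hC
  have hlog : 0 ≤ Real.log ((2 : ℝ) ^ n) := Real.log_nonneg (one_le_pow₀ one_le_two)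
  have hpow : (#A : ℝ) ^ ((3 : ℝ) / 2) = #A * √(#A : ℝ) := by
    rw [Real.sqrt_eq_rpow, ← Real.rpow_one_add' (Nat.cast_nonneg _) (by norm_num)]
    norm_num
  refine (mu_le_of_abs_fhat_ind_le (by positivity) A B C hA).trans_eq ?_
  rw [hB, hC, Real.sqrt_mul_self (Nat.cast_nonneg _), Real.sqrt_mul hlog, hpow]
  field_simp

theorem stmt3 (n : ℕ) (hn : 1 ≤ n) (A : Finset (Fin n → ZMod 2))
    (hA : ∀ S : Finset (Fin n), S ≠ ∅ →
      |fhat n (ind A) S| ≤ (4 / (2 ^ n : ℝ)) * Real.sqrt (Real.log (2 ^ n) * A.card)) :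
    ∀ B C : Finset (Fin n → ZMod 2), B.card = A.card → C.card = A.card →
      (mu A B C : ℝ) ≤ (A.card : ℝ) ^ 3 / (2 ^ n : ℝ) +
        4 * (A.card : ℝ) ^ ((3 : ℝ) / 2) * Real.sqrt (Real.log (2 ^ n)) :=
  stmt3_general n A hA
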